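/- Let −1/2 < κ < 0 and k₁ > 0, k₂ > 0 be given. Then the origin 0 ∈ ℝ² is small-time stable for the double integrator system ẋ₁ = x₂, ẋ₂ = u with the feedback law u(x₁,x₂) = −k₁ ⌊x₁⌉^{1+2κ} − k₂ ⌊x₂⌉^{(1+2κ)/(1+κ)}. -/

import Mathlib

/-!
Put `ν = 1 + κ ∈ (1/2, 1)`. The closed loop is homogeneous of degree `ν - 1` for the dilation
`(x₁, x₂) ↦ (l x₁, l ^ ν x₂)`. The energy `E = k₁/(2ν) |x₁| ^ (2ν) + x₂²/2` is only dissipated,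
`Ė = -k₂ |x₂| ^ (1 + β)` with `β = (2ν - 1)/ν`, so we use the strict Lyapunov function
`V = E² + ε ⌊x₁⌉ ^ (3ν) x₂`, homogeneous of degree `4ν`, whose derivative along the flow is
homogeneous of degree `5ν - 1`. For small `ε`, `V` is positive and `V̇` negative on the unit sphere
of a homogeneous norm, so by homogeneity `V̇ ≤ -c V ^ γ` with `γ = (5ν - 1)/(4ν) < 1`. Such a
differential inequality drives `V` to `0` by time `V(0) ^ (1 - γ) / (c (1 - γ))`, which is small
for small initial data.
-/

open Set Filter

/-- Signed power: `⌊x⌉^a = sign(x) * |x|^a`. -/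
noncomputable def spow (x a : ℝ) : ℝ := Real.sign x * |x| ^ a

/-- Dilation `Λ_r(l, x) = (l^{r₁} x₁, …, l^{rₙ} xₙ)`. -/
noncomputable def dil {n : ℕ} (r : Fin n → ℝ) (l : ℝ) (x : Fin n → ℝ) : Fin n → ℝ :=
  fun i => l ^ r i * x i

/-- `x` is a solution of `ẋ = F(x)` on `[s, ∞)`. -/
def IsSolOn {E : Type*} [NormedAddCommGroup E] [NormedSpace ℝ E]
    (F : E → E) (x : ℝ → E) (s : ℝ) : Prop :=
  ∀ t ∈ Set.Ici s, HasDerivWithinAt x (F (x t)) (Set.Ici s) t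

/-- The origin is (locally) asymptotically stable for `ẋ = F(x)`. -/
def AsympStable {E : Type*} [NormedAddCommGroup E] [NormedSpace ℝ E] (F : E → E) : Prop :=
  (∀ ε > 0, ∃ η > 0, ∀ x : ℝ → E, IsSolOn F x 0 → ‖x 0‖ < η → ∀ t ≥ 0, ‖x t‖ < ε) ∧
  (∃ δ > 0, ∀ x : ℝ → E, IsSolOn F x 0 → ‖x 0‖ < δ →
    Filter.Tendsto x Filter.atTop (nhds 0))

/-- The origin is small-time stable for `ẋ = F(x)`. -/
def SmallTimeStable {E : Type*} [NormedAddCommGroup E] [NormedSpace ℝ E] (F : E → E) : Prop :=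
  ∀ ε > 0, ∃ η > 0, ∀ x : ℝ → E, IsSolOn F x 0 → ‖x 0‖ < η →
    x ε = 0 ∧ ∀ t ≥ 0, ‖x t‖ < ε

open Topology

lemma spow_zero (a : ℝ) : spow 0 a = 0 := by simp [spow]

lemma spow_of_pos {x : ℝ} (hx : 0 < x) (a : ℝ) : spow x a = x ^ a := by
  rw [spow, Real.sign_of_pos hx, abs_of_pos hx, one_mul]

lemma spow_of_neg {x : ℝ} (hx : x < 0) (a : ℝ) : spow x a = -(-x) ^ a := by
  rw [spow, Real.sign_of_neg hx, abs_of_neg hx, neg_one_mul]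

lemma abs_spow_le (x a : ℝ) : |spow x a| ≤ |x| ^ a := by
  rcases lt_trichotomy x 0 with h | rfl | h
  · rw [spow_of_neg h, abs_neg, abs_of_neg h, abs_of_nonneg (Real.rpow_nonneg (by linarith) a)]
  · simpa [spow_zero] using Real.rpow_nonneg (le_refl 0) a
  · rw [spow_of_pos h, abs_of_pos h, abs_of_nonneg (by positivity)]

lemma spow_mul_spow (x : ℝ) {a b : ℝ} (hab : a + b ≠ 0) :
    spow x a * spow x b = |x| ^ (a + b) := by
  rcases lt_trichotomy x 0 with h | rfl | h
  · rw [spow_of_neg h, spow_of_neg h, abs_of_neg h, Real.rpow_add (by linarith)]; ring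
  · simp [spow_zero, Real.zero_rpow hab]
  · rw [spow_of_pos h, spow_of_pos h, abs_of_pos h, Real.rpow_add h]

lemma spow_mul_of_pos {c : ℝ} (hc : 0 < c) (x a : ℝ) :
    spow (c * x) a = c ^ a * spow x a := by
  rcases lt_trichotomy x 0 with h | rfl | h
  · rw [spow_of_neg h, spow_of_neg (by nlinarith), neg_mul_eq_mul_neg,
      Real.mul_rpow hc.le (by linarith)]
    ring
  · simp [spow_zero]
  · rw [spow_of_pos h, spow_of_pos (by positivity), Real.mul_rpow hc.le h.le]

lemma abs_rpow_mul_of_pos {c : ℝ} (hc : 0 < c) (x a : ℝ) :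
    |c * x| ^ a = c ^ a * |x| ^ a := by
  rw [abs_mul, abs_of_pos hc, Real.mul_rpow hc.le (abs_nonneg x)]

lemma spow_eq_mul_abs_rpow (x a : ℝ) : spow x a = x * |x| ^ (a - 1) := by
  rcases lt_trichotomy x 0 with h | rfl | h
  · rw [spow_of_neg h, abs_of_neg h, Real.rpow_sub_one (by linarith)]
    field_simp [h.ne]
  · simp [spow_zero]
  · rw [spow_of_pos h, abs_of_pos h, Real.rpow_sub_one h.ne']
    field_simp

lemma spow_one (x : ℝ) : spow x 1 = x := by
  rw [spow_eq_mul_abs_rpow, sub_self, Real.rpow_zero, mul_one]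

lemma hasDerivAt_abs_rpow_spow (x : ℝ) {a : ℝ} (ha : 1 < a) :
    HasDerivAt (fun y => |y| ^ a) (a * spow x (a - 1)) x := by
  rw [spow_eq_mul_abs_rpow, show a - 1 - 1 = a - 2 by ring, ← mul_assoc, mul_right_comm]
  exact hasDerivAt_abs_rpow x ha

lemma eventually_sign_eq {x : ℝ} (hx : x ≠ 0) : ∀ᶠ y in 𝓝 x, Real.sign y = Real.sign x := by
  rcases hx.lt_or_gt with h | h
  · filter_upwards [Iio_mem_nhds h] with y hy
    rw [Real.sign_of_neg hy, Real.sign_of_neg h]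
  · filter_upwards [Ioi_mem_nhds h] with y hy
    rw [Real.sign_of_pos hy, Real.sign_of_pos h]

lemma hasDerivAt_spow (x : ℝ) {a : ℝ} (ha : 1 < a) :
    HasDerivAt (fun y => spow y a) (a * |x| ^ (a - 1)) x := by
  rcases eq_or_ne x 0 with rfl | hx
  · have hsmall : Tendsto (fun y : ℝ => |y| ^ (a - 1)) (𝓝 0) (𝓝 0) := by
      simpa [Real.zero_rpow (by linarith : a - 1 ≠ 0)] using
        (continuous_abs.tendsto (0 : ℝ)).rpow_const (Or.inr (by linarith : 0 ≤ a - 1))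
    rw [hasDerivAt_iff_isLittleO]
    simpa [spow_eq_mul_abs_rpow, Real.zero_rpow (by linarith : a - 1 ≠ 0)] using
      (Asymptotics.isBigO_refl (fun y : ℝ => y) (𝓝 0)).mul_isLittleO
        ((Asymptotics.isLittleO_one_iff ℝ).mpr hsmall)
  · have hsign : Real.sign x * x = |x| := by
      rcases hx.lt_or_gt with h | h
      · rw [Real.sign_of_neg h, abs_of_neg h]; ring
      · rw [Real.sign_of_pos h, abs_of_pos h]; ring
    have hderiv := (hasDerivAt_abs_rpow x ha).const_mul (Real.sign x)
    refine (hderiv.congr_of_eventuallyEq ?_).congr_deriv ?_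
    · filter_upwards [eventually_sign_eq hx] with y hy
      rw [spow, hy]
    · rw [show a - 1 = a - 2 + 1 by ring, Real.rpow_add_one (abs_ne_zero.mpr hx), ← hsign]
      ring

lemma antitoneOn_Ici_of_hasDerivWithinAt_nonpos {g g' : ℝ → ℝ}
    (hg : ∀ t ≥ 0, HasDerivWithinAt g (g' t) (Ici 0) t) (hg' : ∀ t > 0, g' t ≤ 0) :
    AntitoneOn g (Ici 0) := by
  refine antitoneOn_of_hasDerivWithinAt_nonpos (convex_Ici 0) (f' := g')
    (fun t ht => (hg t ht).continuousWithinAt) (fun t ht => ?_) (fun t ht => ?_)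
  · rw [interior_Ici] at ht
    exact (hg t (le_of_lt ht)).mono interior_subset
  · rw [interior_Ici] at ht
    exact hg' t ht

lemma eq_zero_of_hasDerivWithinAt_le_neg_rpow {g g' : ℝ → ℝ} {c γ : ℝ} (hc : 0 < c)
    (hγ : γ < 1) (hg : ∀ t ≥ 0, HasDerivWithinAt g (g' t) (Ici 0) t)
    (hg_nonneg : ∀ t ≥ 0, 0 ≤ g t) (hg' : ∀ t ≥ 0, g' t ≤ -c * g t ^ γ) {T : ℝ}
    (hT : g 0 ^ (1 - γ) / (c * (1 - γ)) ≤ T) : g T = 0 := by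
  have hγ' : 0 < 1 - γ := sub_pos.mpr hγ
  have hanti : AntitoneOn g (Ici 0) := antitoneOn_Ici_of_hasDerivWithinAt_nonpos hg fun t ht =>
    (hg' t ht.le).trans (by nlinarith [Real.rpow_nonneg (hg_nonneg t ht.le) γ])
  set T₀ := g 0 ^ (1 - γ) / (c * (1 - γ)) with hT₀
  have hT₀_nonneg : 0 ≤ T₀ := by have := hg_nonneg 0 le_rfl; positivity
  suffices hgT₀ : g T₀ = 0 by
    have := hanti hT₀_nonneg (hT₀_nonneg.trans hT) hT
    linarith [hg_nonneg T (hT₀_nonneg.trans hT)]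
  by_contra hne
  have hpos : ∀ t ∈ Icc 0 T₀, 0 < g t := fun t ht =>
    (lt_of_le_of_ne (hg_nonneg T₀ hT₀_nonneg) (Ne.symm hne)).trans_le
      (hanti ht.1 hT₀_nonneg ht.2)
  -- `g ^ (1 - γ)` decreases at rate at least `c (1 - γ)` while `g` is positive
  let w : ℝ → ℝ := fun t => g t ^ (1 - γ) + c * (1 - γ) * t
  have hw : AntitoneOn w (Icc 0 T₀) := by
    refine antitoneOn_of_hasDerivWithinAt_nonpos (convex_Icc 0 T₀)
      (f' := fun t => g' t * (1 - γ) * g t ^ (1 - γ - 1) + c * (1 - γ)) ?_ ?_ ?_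
    · intro t ht
      exact (((hg t ht.1).continuousWithinAt.mono Icc_subset_Ici_self).rpow_const
        (Or.inr hγ'.le)).add (continuous_const.mul continuous_id).continuousWithinAt
    · intro t ht
      rw [interior_Icc] at ht
      have hgt := (hg t ht.1.le).mono (Icc_subset_Ici_self : Icc 0 T₀ ⊆ Ici 0)
      exact ((hgt.rpow_const (Or.inl (hpos t (Ioo_subset_Icc_self ht)).ne')).add
        ((hasDerivWithinAt_id t _).const_mul (c * (1 - γ)))).mono interior_subset
        |>.congr_deriv (by simp)
    · intro t ht
      rw [interior_Icc] at ht
      have hgt := hpos t (Ioo_subset_Icc_self ht)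
      have hinv : g t ^ γ * g t ^ (1 - γ - 1) = 1 := by
        rw [← Real.rpow_add hgt]; simp
      have hmul := mul_le_mul_of_nonneg_right (hg' t ht.1.le)
        (mul_nonneg hγ'.le (Real.rpow_pos_of_pos hgt (1 - γ - 1)).le)
      have hrhs : -c * g t ^ γ * ((1 - γ) * g t ^ (1 - γ - 1)) = -(c * (1 - γ)) := by
        linear_combination (-c * (1 - γ)) * hinv
      linarith
  have hwT₀ := hw (left_mem_Icc.mpr hT₀_nonneg) (right_mem_Icc.mpr hT₀_nonneg) hT₀_nonneg
  have hcT₀ : c * (1 - γ) * T₀ = g 0 ^ (1 - γ) := by rw [hT₀]; field_simp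
  simp only [w, hcT₀, mul_zero, add_zero] at hwT₀
  linarith [Real.rpow_pos_of_pos (hpos T₀ (right_mem_Icc.mpr hT₀_nonneg)) (1 - γ)]

theorem SmallTimeStable.of_lyapunov {E : Type*} [NormedAddCommGroup E] [NormedSpace ℝ E]
    {F : E → E} {V P : E → ℝ} {c γ : ℝ} (hc : 0 < c) (hγ : γ < 1)
    (hV_nonneg : ∀ p, 0 ≤ V p) (hV_zero : Tendsto V (𝓝 0) (𝓝 0))
    (hV_coercive : ∀ ε > 0, ∃ δ > 0, ∀ p, V p < δ → ‖p‖ < ε)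
    (hVP : ∀ (x : ℝ → E) (s : Set ℝ) (t : ℝ),
      HasDerivWithinAt x (F (x t)) s t → HasDerivWithinAt (fun τ => V (x τ)) (P (x t)) s t)
    (hP : ∀ p, P p ≤ -c * V p ^ γ) :
    SmallTimeStable F := by
  intro ε hε
  obtain ⟨δ, hδ, hcoercive⟩ := hV_coercive ε hε
  have hsettle : Tendsto (fun p => V p ^ (1 - γ) / (c * (1 - γ))) (𝓝 0) (𝓝 0) := by
    simpa [Real.zero_rpow (sub_pos.mpr hγ).ne'] using
      (hV_zero.rpow_const (Or.inr (sub_pos.mpr hγ).le)).div_const (c * (1 - γ))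
  obtain ⟨η, hη, hsmall⟩ := Metric.eventually_nhds_iff.mp
    ((hV_zero.eventually (gt_mem_nhds hδ)).and (hsettle.eventually (gt_mem_nhds hε)))
  refine ⟨η, hη, fun x hx hx0 => ?_⟩
  obtain ⟨hVδ, hVε⟩ := hsmall (by simpa using hx0)
  have hderiv : ∀ t ≥ 0, HasDerivWithinAt (fun τ => V (x τ)) (P (x t)) (Ici 0) t :=
    fun t ht => hVP x _ t (hx t ht)
  have hdecay : AntitoneOn (fun τ => V (x τ)) (Ici 0) :=
    antitoneOn_Ici_of_hasDerivWithinAt_nonpos hderiv fun t _ =>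
      (hP _).trans (by nlinarith [Real.rpow_nonneg (hV_nonneg (x t)) γ])
  have hVx : V (x ε) = 0 := eq_zero_of_hasDerivWithinAt_le_neg_rpow hc hγ hderiv
    (fun t _ => hV_nonneg _) (fun t _ => hP _) hVε.le
  refine ⟨?_, fun t ht => hcoercive _ ((hdecay self_mem_Ici ht ht).trans_lt hVδ)⟩
  by_contra hne
  obtain ⟨δ', hδ', h⟩ := hV_coercive ‖x ε‖ (norm_pos_iff.mpr hne)
  exact lt_irrefl _ (h _ (hVx ▸ hδ'))

noncomputable def homNorm (ν : ℝ) (p : ℝ × ℝ) : ℝ := Real.sqrt (p.1 ^ 2 + |p.2| ^ (2 / ν))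

def IsDilationHomogeneous (ν d : ℝ) (f : ℝ × ℝ → ℝ) : Prop :=
  ∀ l > 0, ∀ y : ℝ × ℝ, f (l * y.1, l ^ ν * y.2) = l ^ d * f y

namespace IsDilationHomogeneous

variable {ν d d₁ d₂ : ℝ} {f g : ℝ × ℝ → ℝ}

lemma comp_fst {h : ℝ → ℝ} (hh : ∀ m > 0, ∀ x, h (m * x) = m ^ d * h x) :
    IsDilationHomogeneous ν d fun p => h p.1 :=
  fun l hl y => hh l hl y.1

lemma comp_snd {h : ℝ → ℝ} {a : ℝ} (hh : ∀ m > 0, ∀ x, h (m * x) = m ^ a * h x)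
    (hd : ν * a = d) : IsDilationHomogeneous ν d fun p => h p.2 := fun l hl y => by
  dsimp only
  rw [hh _ (Real.rpow_pos_of_pos hl ν), ← Real.rpow_mul hl.le, hd]

lemma add (hf : IsDilationHomogeneous ν d f) (hg : IsDilationHomogeneous ν d g) :
    IsDilationHomogeneous ν d fun p => f p + g p := fun l hl y => by
  dsimp only
  rw [hf l hl, hg l hl, mul_add]

lemma sub (hf : IsDilationHomogeneous ν d f) (hg : IsDilationHomogeneous ν d g) :
    IsDilationHomogeneous ν d fun p => f p - g p := fun l hl y => by
  dsimp only
  rw [hf l hl, hg l hl, mul_sub]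

lemma const_mul (c : ℝ) (hf : IsDilationHomogeneous ν d f) :
    IsDilationHomogeneous ν d fun p => c * f p := fun l hl y => by
  dsimp only
  rw [hf l hl]; ring

lemma mul (hf : IsDilationHomogeneous ν d₁ f) (hg : IsDilationHomogeneous ν d₂ g)
    (hd : d₁ + d₂ = d) : IsDilationHomogeneous ν d fun p => f p * g p := fun l hl y => by
  dsimp only
  rw [hf l hl, hg l hl, ← hd, Real.rpow_add hl]; ring

lemma pow (hf : IsDilationHomogeneous ν d₁ f) (n : ℕ) (hd : d₁ * n = d) :
    IsDilationHomogeneous ν d fun p => f p ^ n := fun l hl y => by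
  dsimp only
  rw [hf l hl, ← hd, Real.rpow_mul_natCast hl.le, mul_pow]

lemma apply_zero (hf : IsDilationHomogeneous ν d f) (hd : 0 < d) : f 0 = 0 := by
  have h := hf 2 two_pos 0
  simp only [Prod.fst_zero, Prod.snd_zero, mul_zero, Prod.mk_zero_zero] at h
  have : (1 : ℝ) < 2 ^ d := Real.one_lt_rpow one_lt_two hd
  nlinarith

end IsDilationHomogeneous

section Atoms

variable {ν d : ℝ}

lemma isDilationHomogeneous_abs_fst_rpow (a : ℝ) :
    IsDilationHomogeneous ν a fun p => |p.1| ^ a :=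
  IsDilationHomogeneous.comp_fst (h := fun x => |x| ^ a) fun _ hm x =>
    abs_rpow_mul_of_pos hm x a

lemma isDilationHomogeneous_spow_fst (a : ℝ) :
    IsDilationHomogeneous ν a fun p => spow p.1 a :=
  IsDilationHomogeneous.comp_fst (h := fun x => spow x a) fun _ hm x =>
    spow_mul_of_pos hm x a

lemma isDilationHomogeneous_abs_snd_rpow {a : ℝ} (hd : ν * a = d) :
    IsDilationHomogeneous ν d fun p => |p.2| ^ a :=
  IsDilationHomogeneous.comp_snd (h := fun x => |x| ^ a)
    (fun _ hm x => abs_rpow_mul_of_pos hm x a) hd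

lemma isDilationHomogeneous_spow_snd {a : ℝ} (hd : ν * a = d) :
    IsDilationHomogeneous ν d fun p => spow p.2 a :=
  IsDilationHomogeneous.comp_snd (h := fun x => spow x a)
    (fun _ hm x => spow_mul_of_pos hm x a) hd

lemma isDilationHomogeneous_snd_pow {n : ℕ} (hd : ν * n = d) :
    IsDilationHomogeneous ν d fun p => p.2 ^ n :=
  IsDilationHomogeneous.comp_snd (h := fun x => x ^ n)
    (fun m _ x => by rw [Real.rpow_natCast, mul_pow]) hd

end Atoms

lemma homNorm_nonneg (ν : ℝ) (p : ℝ × ℝ) : 0 ≤ homNorm ν p := Real.sqrt_nonneg _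

lemma isDilationHomogeneous_homNorm {ν : ℝ} (hν : 0 < ν) :
    IsDilationHomogeneous ν 1 (homNorm ν) := fun l hl y => by
  have hdil : (l * y.1) ^ 2 + |l ^ ν * y.2| ^ (2 / ν)
      = l ^ 2 * (y.1 ^ 2 + |y.2| ^ (2 / ν)) := by
    rw [abs_rpow_mul_of_pos (Real.rpow_pos_of_pos hl ν), ← Real.rpow_mul hl.le,
      mul_div_cancel₀ _ hν.ne', Real.rpow_two]
    ring
  rw [homNorm, homNorm, hdil, Real.sqrt_mul (sq_nonneg l), Real.sqrt_sq hl.le, Real.rpow_one]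

lemma homNorm_pos (ν : ℝ) {p : ℝ × ℝ} (hp : p ≠ 0) : 0 < homNorm ν p := by
  refine Real.sqrt_pos.mpr ?_
  rcases eq_or_ne p.1 0 with h1 | h1
  · have h2 : p.2 ≠ 0 := fun h2 => hp (Prod.ext h1 h2)
    rw [h1]
    simpa using Real.rpow_pos_of_pos (abs_pos.mpr h2) (2 / ν)
  · exact add_pos_of_pos_of_nonneg (by positivity) (by positivity)

lemma exists_eq_dilation_homNorm_of_ne_zero {ν : ℝ} (hν : 0 < ν) {p : ℝ × ℝ} (hp : p ≠ 0) :
    ∃ y : ℝ × ℝ, y.1 ^ 2 + |y.2| ^ (2 / ν) = 1 ∧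
      p = (homNorm ν p * y.1, homNorm ν p ^ ν * y.2) := by
  set l := homNorm ν p
  have hl : 0 < l := homNorm_pos ν hp
  have hlν : 0 < l ^ ν := Real.rpow_pos_of_pos hl ν
  set y : ℝ × ℝ := (p.1 / l, p.2 / l ^ ν)
  have hpy : p = (l * y.1, l ^ ν * y.2) := by
    ext <;> simp only [y] <;> field_simp
  refine ⟨y, ?_, hpy⟩
  have hy : homNorm ν y = 1 := by
    have := isDilationHomogeneous_homNorm hν l hl y
    rw [← hpy, Real.rpow_one] at this
    exact (mul_eq_left₀ hl.ne').mp this.symm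
  rwa [homNorm, Real.sqrt_eq_one] at hy

namespace IsDilationHomogeneous

variable {ν d c : ℝ} {f : ℝ × ℝ → ℝ}

lemma le_mul_homNorm_rpow (hf : IsDilationHomogeneous ν d f) (hν : 0 < ν) (hd : 0 < d)
    (hc : ∀ y : ℝ × ℝ, y.1 ^ 2 + |y.2| ^ (2 / ν) = 1 → f y ≤ c) (p : ℝ × ℝ) :
    f p ≤ c * homNorm ν p ^ d := by
  rcases eq_or_ne p 0 with rfl | hp
  · rw [hf.apply_zero hd, (isDilationHomogeneous_homNorm hν).apply_zero one_pos,
      Real.zero_rpow hd.ne', mul_zero]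
  obtain ⟨y, hy, hpy⟩ := exists_eq_dilation_homNorm_of_ne_zero hν hp
  rw [hpy, hf _ (homNorm_pos ν hp), ← hpy, mul_comm c]
  exact mul_le_mul_of_nonneg_left (hc y hy) (Real.rpow_nonneg (homNorm_nonneg ν p) d)

lemma mul_homNorm_rpow_le (hf : IsDilationHomogeneous ν d f) (hν : 0 < ν) (hd : 0 < d)
    (hc : ∀ y : ℝ × ℝ, y.1 ^ 2 + |y.2| ^ (2 / ν) = 1 → c ≤ f y) (p : ℝ × ℝ) :
    c * homNorm ν p ^ d ≤ f p := by
  have := (hf.const_mul (-1)).le_mul_homNorm_rpow hν hd (c := -c)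
    (fun y hy => by linarith [hc y hy]) p
  linarith

end IsDilationHomogeneous

noncomputable def closedLoop (ν k₁ k₂ : ℝ) (p : ℝ × ℝ) : ℝ × ℝ :=
  (p.2, -k₁ * spow p.1 (2 * ν - 1) - k₂ * spow p.2 ((2 * ν - 1) / ν))

noncomputable def energy (ν k₁ : ℝ) (p : ℝ × ℝ) : ℝ :=
  k₁ / (2 * ν) * |p.1| ^ (2 * ν) + 1 / 2 * p.2 ^ 2

noncomputable def lyapunov (ν k₁ ε : ℝ) (p : ℝ × ℝ) : ℝ :=
  energy ν k₁ p ^ 2 + ε * (spow p.1 (3 * ν) * p.2)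

noncomputable def lyapunovDeriv (ν k₁ k₂ ε : ℝ) (p : ℝ × ℝ) : ℝ :=
  -(2 * k₂) * energy ν k₁ p * |p.2| ^ (1 + (2 * ν - 1) / ν)
    + ε * (3 * ν * |p.1| ^ (3 * ν - 1) * p.2 ^ 2 - k₁ * |p.1| ^ (5 * ν - 1)
      - k₂ * spow p.1 (3 * ν) * spow p.2 ((2 * ν - 1) / ν))

section Derivatives

lemma HasDerivWithinAt.fst {E F : Type*} [NormedAddCommGroup E] [NormedSpace ℝ E]
    [NormedAddCommGroup F] [NormedSpace ℝ F] {x : ℝ → E × F} {v : E × F} {s : Set ℝ} {t : ℝ}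
    (hx : HasDerivWithinAt x v s t) : HasDerivWithinAt (fun τ => (x τ).1) v.1 s t :=
  (hasFDerivAt_fst (𝕜 := ℝ) (p := x t)).comp_hasDerivWithinAt t hx

lemma HasDerivWithinAt.snd {E F : Type*} [NormedAddCommGroup E] [NormedSpace ℝ E]
    [NormedAddCommGroup F] [NormedSpace ℝ F] {x : ℝ → E × F} {v : E × F} {s : Set ℝ} {t : ℝ}
    (hx : HasDerivWithinAt x v s t) : HasDerivWithinAt (fun τ => (x τ).2) v.2 s t :=
  (hasFDerivAt_snd (𝕜 := ℝ) (p := x t)).comp_hasDerivWithinAt t hx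

variable {ν k₁ k₂ : ℝ} {x : ℝ → ℝ × ℝ} {s : Set ℝ} {t : ℝ}

lemma hasDerivWithinAt_energy (hν : 1 / 2 < ν)
    (hx : HasDerivWithinAt x (closedLoop ν k₁ k₂ (x t)) s t) :
    HasDerivWithinAt (fun τ => energy ν k₁ (x τ))
      (-k₂ * |(x t).2| ^ (1 + (2 * ν - 1) / ν)) s t := by
  have := (((hasDerivAt_abs_rpow_spow (x t).1 (by linarith : 1 < 2 * ν)).comp_hasDerivWithinAt t
    hx.fst).const_mul (k₁ / (2 * ν))).add ((hx.snd.pow 2).const_mul (1 / 2))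
  refine this.congr_deriv ?_
  have hβ : 1 + (2 * ν - 1) / ν ≠ 0 := by
    have : 0 < (2 * ν - 1) / ν := div_pos (by linarith) (by linarith)
    linarith
  rw [← spow_mul_spow _ hβ, spow_one, closedLoop]
  field_simp
  ring

lemma hasDerivWithinAt_lyapunov (hν : 1 / 2 < ν) (ε : ℝ)
    (hx : HasDerivWithinAt x (closedLoop ν k₁ k₂ (x t)) s t) :
    HasDerivWithinAt (fun τ => lyapunov ν k₁ ε (x τ)) (lyapunovDeriv ν k₁ k₂ ε (x t)) s t := by
  have hcross := (hasDerivAt_spow (x t).1 (by linarith : 1 < 3 * ν)).comp_hasDerivWithinAt t hx.fst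
  have := ((hasDerivWithinAt_energy hν hx).pow 2).add ((hcross.mul hx.snd).const_mul ε)
  have hpow : spow (x t).1 (3 * ν) * spow (x t).1 (2 * ν - 1) = |(x t).1| ^ (5 * ν - 1) := by
    rw [spow_mul_spow _ (by linarith)]
    ring_nf
  refine this.congr_deriv ?_
  simp only [Function.comp_apply, lyapunovDeriv, closedLoop, ← hpow]
  push_cast
  ring

end Derivatives

section Homogeneity

open IsDilationHomogeneous

variable {ν : ℝ}

lemma isDilationHomogeneous_energy (k₁ : ℝ) :
    IsDilationHomogeneous ν (2 * ν) (energy ν k₁) :=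
  ((isDilationHomogeneous_abs_fst_rpow _).const_mul _).add
    ((isDilationHomogeneous_snd_pow (by push_cast; ring)).const_mul _)

lemma isDilationHomogeneous_lyapunov (k₁ ε : ℝ) :
    IsDilationHomogeneous ν (4 * ν) (lyapunov ν k₁ ε) := by
  have hsnd : IsDilationHomogeneous ν ν fun p => p.2 :=
    comp_snd (h := fun x => x) (fun m _ x => by rw [Real.rpow_one]) (mul_one ν)
  exact ((isDilationHomogeneous_energy k₁).pow 2 (by push_cast; ring)).add
    (((isDilationHomogeneous_spow_fst _).mul hsnd (by ring)).const_mul ε)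

lemma isDilationHomogeneous_lyapunovDeriv (hν : ν ≠ 0) (k₁ k₂ ε : ℝ) :
    IsDilationHomogeneous ν (5 * ν - 1) (lyapunovDeriv ν k₁ k₂ ε) := by
  have hβ : ν * ((2 * ν - 1) / ν) = 2 * ν - 1 := by field_simp
  have hdiss : IsDilationHomogeneous ν (3 * ν - 1) fun p => |p.2| ^ (1 + (2 * ν - 1) / ν) :=
    isDilationHomogeneous_abs_snd_rpow (by rw [mul_add, hβ]; ring)
  have hfric : IsDilationHomogeneous ν (2 * ν - 1) fun p => spow p.2 ((2 * ν - 1) / ν) :=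
    isDilationHomogeneous_spow_snd hβ
  have hsq : IsDilationHomogeneous ν (2 * ν) fun p => p.2 ^ 2 :=
    isDilationHomogeneous_snd_pow (by push_cast; ring)
  unfold lyapunovDeriv
  refine (((isDilationHomogeneous_energy k₁).const_mul _).mul hdiss ?_).add
    ((((((isDilationHomogeneous_abs_fst_rpow _).const_mul _).mul hsq ?_).sub
      ((isDilationHomogeneous_abs_fst_rpow _).const_mul _)).sub
      (((isDilationHomogeneous_spow_fst _).const_mul _).mul hfric ?_)).const_mul _) <;> ring

end Homogeneity

section UnitSphere

variable {ν k₁ k₂ ε : ℝ} {y : ℝ × ℝ}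

lemma abs_fst_le_one_of_sphere (hy : y.1 ^ 2 + |y.2| ^ (2 / ν) = 1) : |y.1| ≤ 1 := by
  have : |y.1| ^ 2 ≤ 1 := by rw [sq_abs]; linarith [Real.rpow_nonneg (abs_nonneg y.2) (2 / ν)]
  exact (sq_le_one_iff₀ (abs_nonneg _)).mp this

lemma abs_snd_le_one_of_sphere (hν : 0 < ν) (hy : y.1 ^ 2 + |y.2| ^ (2 / ν) = 1) :
    |y.2| ≤ 1 := by
  have : |y.2| ^ (2 / ν) ≤ 1 := by linarith [sq_nonneg y.1]
  exact not_lt.mp fun h => (Real.one_lt_rpow h (by positivity)).not_ge this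

lemma abs_spow_fst_mul_snd_le_one_of_sphere (hν : 0 < ν)
    (hy : y.1 ^ 2 + |y.2| ^ (2 / ν) = 1) : |spow y.1 (3 * ν) * y.2| ≤ 1 := by
  rw [abs_mul]
  have h₁ : |spow y.1 (3 * ν)| ≤ 1 := (abs_spow_le _ _).trans
    (Real.rpow_le_one (abs_nonneg _) (abs_fst_le_one_of_sphere hy) (by positivity))
  nlinarith [abs_nonneg (spow y.1 (3 * ν)), abs_snd_le_one_of_sphere hν hy, abs_nonneg y.2]

lemma le_energy_of_sphere (hν : 1 / 2 < ν) (hν₁ : ν ≤ 1) (hk₁ : 0 < k₁)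
    (hy : y.1 ^ 2 + |y.2| ^ (2 / ν) = 1) : min k₁ 1 / 2 ≤ energy ν k₁ y := by
  have ha := abs_fst_le_one_of_sphere hy
  have hb := abs_snd_le_one_of_sphere (by linarith) hy
  have hpot : |y.1| ^ 2 ≤ |y.1| ^ (2 * ν) := by
    rw [← Real.rpow_two]
    exact Real.rpow_le_rpow_of_exponent_ge' (abs_nonneg _) ha (by linarith) (by linarith)
  have hkin : |y.2| ^ (2 / ν) ≤ y.2 ^ 2 := by
    rw [← sq_abs, ← Real.rpow_two]
    exact Real.rpow_le_rpow_of_exponent_ge' (abs_nonneg _) hb zero_le_two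
      (by rw [le_div_iff₀ (by linarith)]; linarith)
  have hcoef : k₁ / 2 ≤ k₁ / (2 * ν) := div_le_div_of_nonneg_left hk₁.le (by linarith) (by linarith)
  have hmin : min k₁ 1 * (y.1 ^ 2 + |y.2| ^ (2 / ν)) ≤ k₁ * y.1 ^ 2 + |y.2| ^ (2 / ν) := by
    nlinarith [min_le_left k₁ 1, min_le_right k₁ 1, sq_nonneg y.1,
      Real.rpow_nonneg (abs_nonneg y.2) (2 / ν)]
  rw [hy, mul_one] at hmin
  rw [sq_abs] at hpot
  rw [energy]
  nlinarith [Real.rpow_nonneg (abs_nonneg y.1) (2 * ν)]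

lemma energy_le_of_sphere (hν : 1 / 2 ≤ ν) (hk₁ : 0 ≤ k₁)
    (hy : y.1 ^ 2 + |y.2| ^ (2 / ν) = 1) : energy ν k₁ y ≤ k₁ + 1 / 2 := by
  have hpot : |y.1| ^ (2 * ν) ≤ 1 :=
    Real.rpow_le_one (abs_nonneg _) (abs_fst_le_one_of_sphere hy) (by linarith)
  have hkin : y.2 ^ 2 ≤ 1 := by
    rw [← sq_abs]; exact pow_le_one₀ (abs_nonneg _) (abs_snd_le_one_of_sphere (by linarith) hy)
  have hcoef : k₁ / (2 * ν) ≤ k₁ := div_le_self hk₁ (by linarith)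
  rw [energy]
  nlinarith [Real.rpow_nonneg (abs_nonneg y.1) (2 * ν), div_nonneg hk₁ (by linarith : 0 ≤ 2 * ν)]

lemma le_lyapunov_of_sphere (hν : 1 / 2 < ν) (hν₁ : ν ≤ 1) (hk₁ : 0 < k₁) (hε : 0 ≤ ε)
    (hε' : ε ≤ (min k₁ 1 / 2) ^ 2 / 2) (hy : y.1 ^ 2 + |y.2| ^ (2 / ν) = 1) :
    (min k₁ 1 / 2) ^ 2 / 2 ≤ lyapunov ν k₁ ε y := by
  have hE := le_energy_of_sphere hν hν₁ hk₁ hy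
  have hcross := neg_le_of_abs_le (abs_spow_fst_mul_snd_le_one_of_sphere (by linarith) hy)
  have hc₀ : 0 ≤ min k₁ 1 / 2 := by positivity
  rw [lyapunov]
  nlinarith

lemma lyapunov_le_of_sphere (hν : 1 / 2 ≤ ν) (hk₁ : 0 ≤ k₁) (hε : 0 ≤ ε) (hε' : ε ≤ 1)
    (hy : y.1 ^ 2 + |y.2| ^ (2 / ν) = 1) : lyapunov ν k₁ ε y ≤ (k₁ + 1 / 2) ^ 2 + 1 := by
  have hE := energy_le_of_sphere hν hk₁ hy
  have hE₀ : 0 ≤ energy ν k₁ y := by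
    rw [energy]
    have : 0 ≤ k₁ / (2 * ν) := div_nonneg hk₁ (by linarith)
    positivity
  have hcross := le_of_abs_le (abs_spow_fst_mul_snd_le_one_of_sphere (by linarith) hy)
  rw [lyapunov]
  nlinarith

lemma lyapunovDeriv_le_of_sphere (hν : 1 / 2 < ν) (hν₁ : ν ≤ 1) (hk₁ : 0 < k₁) (hk₂ : 0 ≤ k₂)
    (hε : 0 ≤ ε) (hy : y.1 ^ 2 + |y.2| ^ (2 / ν) = 1) :
    lyapunovDeriv ν k₁ k₂ ε y ≤ -(2 * k₂ * (min k₁ 1 / 2)) * |y.2| ^ (1 + (2 * ν - 1) / ν)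
      + ε * (3 + k₂) * |y.2| ^ ((2 * ν - 1) / ν) - ε * k₁ * |y.1| ^ (5 * ν - 1) := by
  set β := (2 * ν - 1) / ν
  have hβ : 0 < β := div_pos (by linarith) (by linarith)
  have hβ₁ : β ≤ 1 := (div_le_one (by linarith)).mpr (by linarith)
  have ha := abs_fst_le_one_of_sphere hy
  have hb := abs_snd_le_one_of_sphere (by linarith) hy
  have hdiss : -(2 * k₂) * energy ν k₁ y * |y.2| ^ (1 + β)
      ≤ -(2 * k₂ * (min k₁ 1 / 2)) * |y.2| ^ (1 + β) := by
    have hE := sub_nonneg.mpr (le_energy_of_sphere hν hν₁ hk₁ hy)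
    have : 0 ≤ |y.2| ^ (1 + β) := by positivity
    nlinarith [mul_nonneg (mul_nonneg hk₂ hE) this]
  have hkin : 3 * ν * |y.1| ^ (3 * ν - 1) * y.2 ^ 2 ≤ 3 * |y.2| ^ β := by
    have h₁ : |y.1| ^ (3 * ν - 1) ≤ 1 := Real.rpow_le_one (abs_nonneg _) ha (by linarith)
    have h₂ : y.2 ^ 2 ≤ |y.2| ^ β := by
      rw [← sq_abs, ← Real.rpow_two]
      exact Real.rpow_le_rpow_of_exponent_ge' (abs_nonneg _) hb hβ.le (by linarith)
    have : 0 ≤ |y.1| ^ (3 * ν - 1) := by positivity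
    have hνa : ν * |y.1| ^ (3 * ν - 1) ≤ 1 := by nlinarith
    linarith [mul_le_mul hνa h₂ (sq_nonneg _) zero_le_one]
  have hfric : -(k₂ * spow y.1 (3 * ν) * spow y.2 β) ≤ k₂ * |y.2| ^ β := by
    have h₁ : |spow y.1 (3 * ν)| ≤ 1 := (abs_spow_le _ _).trans
      (Real.rpow_le_one (abs_nonneg _) ha (by positivity))
    have h₂ := abs_spow_le y.2 β
    have : |spow y.1 (3 * ν) * spow y.2 β| ≤ |y.2| ^ β := by
      rw [abs_mul]; nlinarith [abs_nonneg (spow y.1 (3 * ν)), abs_nonneg (spow y.2 β)]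
    nlinarith [neg_le_of_abs_le this]
  rw [lyapunovDeriv]
  nlinarith

lemma exists_lyapunovDeriv_le_neg_of_sphere (hν : 1 / 2 < ν) (hν₁ : ν ≤ 1) (hk₁ : 0 < k₁)
    (hk₂ : 0 < k₂) : ∃ ε > 0, ε ≤ (min k₁ 1 / 2) ^ 2 / 2 ∧ ∃ c > 0, ∀ y : ℝ × ℝ,
      y.1 ^ 2 + |y.2| ^ (2 / ν) = 1 → lyapunovDeriv ν k₁ k₂ ε y ≤ -c := by
  set c₀ := min k₁ 1 / 2
  set β := (2 * ν - 1) / ν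
  set K := 3 + k₂
  have hc₀ : 0 < c₀ := by positivity
  have hβ : 0 < β := div_pos (by linarith) (by linarith)
  have hK : 0 < K := by positivity
  obtain ⟨δ, hδ, hδ₁, hδβ⟩ : ∃ δ > 0, δ ≤ 1 / 2 ∧ K * δ ^ β ≤ k₁ / 8 := by
    have hroot : (((k₁ / (8 * K)) ^ β⁻¹) ^ β) = k₁ / (8 * K) :=
      Real.rpow_inv_rpow (by positivity) hβ.ne'
    refine ⟨min (1 / 2) ((k₁ / (8 * K)) ^ β⁻¹), by positivity, min_le_left _ _, ?_⟩
    calc K * min (1 / 2) ((k₁ / (8 * K)) ^ β⁻¹) ^ β ≤ K * ((k₁ / (8 * K)) ^ β⁻¹) ^ β := by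
          gcongr; exact min_le_right _ _
      _ = k₁ / 8 := by rw [hroot]; field_simp
  have hδpow : 0 < δ ^ (1 + β) := by positivity
  set ε := min (c₀ ^ 2 / 2) (k₂ * c₀ * δ ^ (1 + β) / K)
  have hε : 0 < ε := by positivity
  have hεK : ε * K ≤ k₂ * c₀ * δ ^ (1 + β) := (le_div_iff₀ hK).mp (min_le_right _ _)
  refine ⟨ε, hε, min_le_left _ _, min (ε * k₁ / 8) (k₂ * c₀ * δ ^ (1 + β)), by positivity,
    fun y hy => ?_⟩
  have hbound : lyapunovDeriv ν k₁ k₂ ε y ≤ -(2 * k₂ * c₀) * |y.2| ^ (1 + β) + ε * K * |y.2| ^ β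
      - ε * k₁ * |y.1| ^ (5 * ν - 1) := lyapunovDeriv_le_of_sphere hν hν₁ hk₁ hk₂.le hε.le hy
  have hb := abs_snd_le_one_of_sphere (by linarith) hy
  rcases le_total |y.2| δ with hsmall | hlarge
  · -- near the `y₁`-axis the cross term `-ε k₁ |y₁| ^ (5ν - 1)` takes over
    have hy₁ : 1 / 2 ≤ y.1 ^ 2 := by
      have : |y.2| ^ (2 / ν) ≤ |y.2| ^ (1 : ℝ) := Real.rpow_le_rpow_of_exponent_ge'
        (abs_nonneg _) hb zero_le_one (by rw [le_div_iff₀ (by linarith)]; linarith)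
      rw [Real.rpow_one] at this
      linarith
    have hpow : 1 / 4 ≤ |y.1| ^ (5 * ν - 1) := by
      have : |y.1| ^ (4 : ℝ) ≤ |y.1| ^ (5 * ν - 1) := Real.rpow_le_rpow_of_exponent_ge'
        (abs_nonneg _) (abs_fst_le_one_of_sphere hy) (by linarith) (by linarith)
      rw [show (4 : ℝ) = (2 : ℕ) * (2 : ℕ) by norm_num, Real.rpow_natCast_mul (abs_nonneg _),
        Real.rpow_natCast, sq_abs] at this
      nlinarith
    have hsmallβ : K * |y.2| ^ β ≤ k₁ / 8 :=
      (mul_le_mul_of_nonneg_left (Real.rpow_le_rpow (abs_nonneg _) hsmall hβ.le) hK.le).trans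
        hδβ
    have : 0 ≤ |y.2| ^ (1 + β) := by positivity
    linarith [min_le_left (ε * k₁ / 8) (k₂ * c₀ * δ ^ (1 + β)),
      mul_nonneg (mul_nonneg hk₂.le hc₀.le) this, mul_le_mul_of_nonneg_left hsmallβ hε.le,
      mul_le_mul_of_nonneg_left hpow (mul_nonneg hε.le hk₁.le)]
  · have hdiss : δ ^ (1 + β) ≤ |y.2| ^ (1 + β) := Real.rpow_le_rpow hδ.le hlarge (by positivity)
    have hβ₁ : |y.2| ^ β ≤ 1 := Real.rpow_le_one (abs_nonneg _) hb hβ.le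
    have : 0 ≤ |y.1| ^ (5 * ν - 1) := by positivity
    linarith [min_le_right (ε * k₁ / 8) (k₂ * c₀ * δ ^ (1 + β)),
      mul_le_mul_of_nonneg_left hdiss (by positivity : 0 ≤ 2 * k₂ * c₀),
      mul_le_mul_of_nonneg_left hβ₁ (by positivity : 0 ≤ ε * K),
      mul_nonneg (mul_nonneg hε.le hk₁.le) this]

end UnitSphere

section HomNormBounds

variable {ν : ℝ}

lemma continuous_homNorm (hν : 0 < ν) : Continuous (homNorm ν) :=
  ((continuous_fst.pow 2).add ((continuous_abs.comp continuous_snd).rpow_const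
    fun _ => Or.inr (by positivity))).sqrt

lemma abs_fst_le_homNorm (p : ℝ × ℝ) : |p.1| ≤ homNorm ν p :=
  Real.abs_le_sqrt (by linarith [Real.rpow_nonneg (abs_nonneg p.2) (2 / ν)])

lemma abs_snd_le_homNorm_rpow (hν : 0 < ν) (p : ℝ × ℝ) : |p.2| ≤ homNorm ν p ^ ν := by
  have hsq : |p.2| ^ (2 / ν) ≤ homNorm ν p ^ (2 : ℝ) := by
    rw [Real.rpow_two, homNorm, Real.sq_sqrt (by positivity)]
    linarith [sq_nonneg p.1]
  have := Real.rpow_le_rpow (by positivity) hsq (by positivity : 0 ≤ ν / 2)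
  rwa [← Real.rpow_mul (abs_nonneg _), ← Real.rpow_mul (homNorm_nonneg ν p),
    show 2 / ν * (ν / 2) = 1 by field_simp, show 2 * (ν / 2) = ν by ring, Real.rpow_one] at this

lemma norm_lt_of_homNorm_rpow_lt (hν : 0 < ν) (hν₁ : ν ≤ 1) {p : ℝ × ℝ} {m : ℝ} (hm : m ≤ 1)
    (hp : homNorm ν p ^ ν < m) : ‖p‖ < m := by
  have hρ : homNorm ν p ≤ 1 := not_lt.mp fun h =>
    (Real.one_lt_rpow h hν).not_ge (hp.le.trans hm)
  have hρν : homNorm ν p ≤ homNorm ν p ^ ν := by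
    simpa using Real.rpow_le_rpow_of_exponent_ge' (homNorm_nonneg ν p) hρ hν.le hν₁
  rw [Prod.norm_def, Real.norm_eq_abs, Real.norm_eq_abs]
  exact max_lt ((abs_fst_le_homNorm p).trans hρν |>.trans_lt hp)
    ((abs_snd_le_homNorm_rpow hν p).trans_lt hp)

lemma tendsto_zero_of_le_mul_homNorm_rpow (hν : 0 < ν) {f : ℝ × ℝ → ℝ} {C d : ℝ} (hd : 0 < d)
    (hf₀ : ∀ p, 0 ≤ f p) (hf : ∀ p, f p ≤ C * homNorm ν p ^ d) : Tendsto f (𝓝 0) (𝓝 0) := by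
  have hρ : Tendsto (fun p => C * homNorm ν p ^ d) (𝓝 0) (𝓝 0) := by
    have := (((continuous_homNorm hν).rpow_const fun _ => Or.inr hd.le).const_mul C).tendsto 0
    rwa [(isDilationHomogeneous_homNorm hν).apply_zero one_pos, Real.zero_rpow hd.ne',
      mul_zero] at this
  exact squeeze_zero hf₀ hf hρ

lemma exists_norm_lt_of_mul_homNorm_rpow_le (hν : 0 < ν) (hν₁ : ν ≤ 1) {f : ℝ × ℝ → ℝ}
    {c d : ℝ} (hc : 0 < c) (hd : 0 < d) (hf : ∀ p, c * homNorm ν p ^ d ≤ f p) :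
    ∀ ε > 0, ∃ δ > 0, ∀ p, f p < δ → ‖p‖ < ε := by
  intro ε hε
  set m := min 1 ε
  have hm : 0 < m := lt_min one_pos hε
  refine ⟨c * (m ^ ν⁻¹) ^ d, by positivity, fun p hp => ?_⟩
  have hρ : homNorm ν p < m ^ ν⁻¹ := by
    have := (hf p).trans_lt hp
    rw [mul_lt_mul_iff_right₀ hc] at this
    exact (Real.rpow_lt_rpow_iff (homNorm_nonneg ν p) (by positivity) hd).mp this
  have := Real.rpow_lt_rpow (homNorm_nonneg ν p) hρ hν
  rw [Real.rpow_inv_rpow hm.le hν.ne'] at this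
  exact (norm_lt_of_homNorm_rpow_lt hν hν₁ (min_le_left _ _) this).trans_le (min_le_right _ _)

end HomNormBounds

lemma le_neg_mul_rpow_of_le_mul_rpow {P V C c r a b : ℝ} (hC : 0 < C) (hc : 0 ≤ c) (hr : 0 ≤ r)
    (ha : 0 < a) (hb : 0 ≤ b) (hV : 0 ≤ V) (hVr : V ≤ C * r ^ a) (hPr : P ≤ -c * r ^ b) :
    P ≤ -(c / C ^ (b / a)) * V ^ (b / a) := by
  have hCγ : 0 < C ^ (b / a) := by positivity
  have hVγ : V ^ (b / a) ≤ C ^ (b / a) * r ^ b := by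
    calc V ^ (b / a) ≤ (C * r ^ a) ^ (b / a) :=
          Real.rpow_le_rpow hV hVr (div_nonneg hb ha.le)
      _ = C ^ (b / a) * r ^ b := by
        rw [Real.mul_rpow hC.le (by positivity), ← Real.rpow_mul hr, mul_div_cancel₀ _ ha.ne']
  have : c / C ^ (b / a) * V ^ (b / a) ≤ c * r ^ b := by
    calc c / C ^ (b / a) * V ^ (b / a) ≤ c / C ^ (b / a) * (C ^ (b / a) * r ^ b) := by gcongr
      _ = c * r ^ b := by field_simp
  linarith

theorem smallTimeStable_closedLoop {ν k₁ k₂ : ℝ} (hν : 1 / 2 < ν) (hν₁ : ν < 1) (hk₁ : 0 < k₁)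
    (hk₂ : 0 < k₂) : SmallTimeStable (closedLoop ν k₁ k₂) := by
  have hν₀ : 0 < ν := by linarith
  obtain ⟨ε, hε, hε', c, hc, hsphere⟩ := exists_lyapunovDeriv_le_neg_of_sphere hν hν₁.le hk₁ hk₂
  have hε₁ : ε ≤ 1 := by
    have : 0 ≤ min k₁ 1 := by positivity
    nlinarith [min_le_right k₁ 1]
  have hV := isDilationHomogeneous_lyapunov (ν := ν) k₁ ε
  have hlower := hV.mul_homNorm_rpow_le hν₀ (by positivity)
    fun y hy => le_lyapunov_of_sphere hν hν₁.le hk₁ hε.le hε' hy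
  have hupper := hV.le_mul_homNorm_rpow hν₀ (by positivity)
    fun y hy => lyapunov_le_of_sphere hν.le hk₁.le hε.le hε₁ hy
  have hderiv := (isDilationHomogeneous_lyapunovDeriv hν₀.ne' k₁ k₂ ε).le_mul_homNorm_rpow hν₀
    (by linarith) hsphere
  have hnonneg : ∀ p, 0 ≤ lyapunov ν k₁ ε p := fun p =>
    (mul_nonneg (by positivity) (Real.rpow_nonneg (homNorm_nonneg ν p) _)).trans (hlower p)
  refine SmallTimeStable.of_lyapunov (γ := (5 * ν - 1) / (4 * ν))
    (c := c / ((k₁ + 1 / 2) ^ 2 + 1) ^ ((5 * ν - 1) / (4 * ν)))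
    (by positivity) ((div_lt_one (by positivity)).mpr (by linarith)) hnonneg
    (tendsto_zero_of_le_mul_homNorm_rpow hν₀ (by positivity) hnonneg hupper)
    (exists_norm_lt_of_mul_homNorm_rpow_le hν₀ hν₁.le (by positivity) (by positivity) hlower)
    (fun x s t hx => hasDerivWithinAt_lyapunov hν ε hx) fun p => ?_
  exact le_neg_mul_rpow_of_le_mul_rpow (by positivity) hc.le (homNorm_nonneg ν p)
    (by positivity) (by linarith) (hnonneg p) (hupper p) (hderiv p)

theorem stmt6 (κ k₁ k₂ : ℝ) (hκ₁ : -(1/2) < κ) (hκ₂ : κ < 0)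
    (hk₁ : 0 < k₁) (hk₂ : 0 < k₂) :
    SmallTimeStable (fun p : ℝ × ℝ =>
      (p.2, -k₁ * spow p.1 (1 + 2*κ) - k₂ * spow p.2 ((1 + 2*κ) / (1 + κ)))) := by
  have hfield : (fun p : ℝ × ℝ =>
      (p.2, -k₁ * spow p.1 (1 + 2*κ) - k₂ * spow p.2 ((1 + 2*κ) / (1 + κ))))
      = closedLoop (1 + κ) k₁ k₂ := by
    funext p
    rw [closedLoop, show 2 * (1 + κ) - 1 = 1 + 2 * κ by ring]
  rw [hfield]
  exact smallTimeStable_closedLoop (by linarith) (by linarith) hk₁ hk₂
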